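/- If two flat Plebeia trees t₁ and t₂ over the same value type both satisfy the structural invariants (SI1) and (SI2) and their models are equal as partial maps (⟦t₁⟧(k) = ⟦t₂⟧(k) for every key k), then t₁ = t₂; i.e., the structural invariants force a canonical tree representation of each key–value store. -/

import Mathlib

/-- A side is `L` or `R`. -/
inductive Side : Type
  | L | R
deriving DecidableEq, Repr

/-- A key is a list of sides. -/
abbrev Key := List Side

/-- The strict order `L < R` on sides. -/
def Side.lt : Side → Side → Prop := fun a b => a = Side.L ∧ b = Side.R

/-- The strict lexicographic order on keys induced by `L < R`. -/
def keyLt : Key → Key → Prop := List.Lex Side.lt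

/-- A list of keys is prefix-free: for any two distinct keys in it,
neither is a prefix of the other. -/
def PrefixFreeList (ks : List Key) : Prop :=
  List.Pairwise (fun a b => ¬ a <+: b ∧ ¬ b <+: a) ks

/-- A set of keys is prefix-free. -/
def PrefixFreeSet (S : Set Key) : Prop :=
  ∀ a ∈ S, ∀ b ∈ S, a ≠ b → ¬ a <+: b

/-- A list of keys is strictly increasing in the lexicographic order. -/
def SortedKeys (ks : List Key) : Prop := List.Pairwise keyLt ks

/-- Key list of an association list is prefix-free and strictly increasing. -/
def GoodKeyList (ks : List Key) : Prop := PrefixFreeList ks ∧ SortedKeys ks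

/-- Prepend the key `s` to the key of every entry. -/
def prependAll {β : Type _} (s : Key) (l : List (Key × β)) : List (Key × β) :=
  l.map (fun e => (s ++ e.1, e.2))

/-- `lookup l k` is `some` of the value of the first entry of `l` with key `k`. -/
def lookupA {β : Type _} (l : List (Key × β)) (k : Key) : Option β :=
  (l.find? (fun e => decide (e.1 = k))).map Prod.snd
/-- Flat Plebeia trees over a value type `α`. -/
inductive FNode (α : Type) : Type
  | leaf : α → FNode α
  | branch : FNode α → FNode α → FNode α
  | extender : Key → FNode α → FNode α

variable {α : Type}

def FNode.isExtender : FNode α → Prop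
  | .extender _ _ => True
  | _ => False

/-- The model `⟦t⟧ : key ⇀ α` of a flat Plebeia tree, as a function into `Option`. -/
def FNode.model : FNode α → Key → Option α
  | .leaf v, [] => some v
  | .leaf _, _ :: _ => none
  | .branch l _, Side.L :: k => l.model k
  | .branch _ r, Side.R :: k => r.model k
  | .branch _ _, [] => none
  | .extender s n, k => if s <+: k then n.model (k.drop s.length) else none

/-- `DOM t`: the set of keys on which `⟦t⟧` is defined. -/
def FNode.dom (t : FNode α) : Set Key := {k | (t.model k).isSome}

/-- Structural invariants (SI1), (SI2) at every subtree:
no extender has an extender as direct child, and no extender has an empty key. -/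
def FNode.inv : FNode α → Prop
  | .leaf _ => True
  | .branch l r => l.inv ∧ r.inv
  | .extender s n => (¬ n.isExtender) ∧ s ≠ [] ∧ n.inv

/-!
By induction on `t₁`. Every tree has a nonempty domain. All keys in the domain of an extender
start with its key, which is nonempty by (SI2), whereas the domain of a leaf or a branch has no
common nonempty prefix; so equal models force equal constructors. For two extenders, (SI1) makes
both children leaves or branches, and then neither key can be a proper prefix of the other.
-/

namespace FNode

theorem dom_nonempty : ∀ t : FNode α, t.dom.Nonempty
  | .leaf _ => ⟨[], rfl⟩
  | .branch l _ => by
    obtain ⟨k, hk⟩ := l.dom_nonempty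
    exact ⟨Side.L :: k, hk⟩
  | .extender s n => by
    obtain ⟨k, hk⟩ := n.dom_nonempty
    exact ⟨s ++ k, by simpa [dom, model] using hk⟩

theorem model_extender_append (s k : Key) (n : FNode α) :
    (extender s n).model (s ++ k) = n.model k := by
  simp [model]

theorem prefix_of_mem_dom_extender {s k : Key} {n : FNode α} (hk : k ∈ (extender s n).dom) :
    s <+: k := by
  by_contra hs
  simp [dom, model, hs] at hk

theorem dom_eq_of_model_eq {t₁ t₂ : FNode α} (h : ∀ k, t₁.model k = t₂.model k) :
    t₁.dom = t₂.dom := by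
  simp only [dom, h]

/-- A leaf is defined at `[]`, a branch at keys starting with `L` and at keys starting with `R`. -/
theorem isExtender_of_forall_mem_dom_prefix {n : FNode α} {c : Side} {p : Key}
    (h : ∀ k ∈ n.dom, c :: p <+: k) : n.isExtender := by
  cases n with
  | leaf => simpa using h [] rfl
  | branch l r =>
    obtain ⟨kl, hkl⟩ := l.dom_nonempty
    obtain ⟨kr, hkr⟩ := r.dom_nonempty
    have hL := (List.cons_prefix_cons.mp (h (Side.L :: kl) hkl)).1
    have hR := (List.cons_prefix_cons.mp (h (Side.R :: kr) hkr)).1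
    exact absurd (hL.symm.trans hR) (by decide)
  | extender => trivial

theorem isExtender_of_model_eq_extender {s : Key} {n t : FNode α} (hs : s ≠ [])
    (h : ∀ k, (extender s n).model k = t.model k) : t.isExtender := by
  obtain ⟨c, p, rfl⟩ := List.exists_cons_of_ne_nil hs
  refine isExtender_of_forall_mem_dom_prefix (c := c) (p := p) fun k hk => ?_
  rw [← dom_eq_of_model_eq h] at hk
  exact prefix_of_mem_dom_extender hk

/-- If `s ++ c :: p` were the longer key, every key in the domain of `n` would start with
`c :: p`. -/
theorem extender_key_eq_of_prefix {s s' : Key} {n n' : FNode α} (hn : ¬ n.isExtender)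
    (h : ∀ k, (extender s n).model k = (extender s' n').model k) (hss' : s <+: s') : s = s' := by
  obtain ⟨_ | ⟨c, p⟩, rfl⟩ := hss'
  · exact (List.append_nil s).symm
  refine absurd (isExtender_of_forall_mem_dom_prefix (c := c) (p := p) fun k hk => ?_) hn
  have hsk : s ++ k ∈ (extender (s ++ c :: p) n').dom := by
    simpa [dom, ← h, model_extender_append] using hk
  exact (List.prefix_append_right_inj s).mp (prefix_of_mem_dom_extender hsk)

theorem extender_key_eq {s s' : Key} {n n' : FNode α} (hn : ¬ n.isExtender)
    (hn' : ¬ n'.isExtender) (h : ∀ k, (extender s n).model k = (extender s' n').model k) :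
    s = s' := by
  obtain ⟨k, hk⟩ := n.dom_nonempty
  have hs'k : s' <+: s ++ k := by
    refine prefix_of_mem_dom_extender (n := n') ?_
    simpa [dom, ← h, model_extender_append] using hk
  rcases List.prefix_or_prefix_of_prefix (List.prefix_append s k) hs'k with hss' | hs's
  · exact extender_key_eq_of_prefix hn h hss'
  · exact (extender_key_eq_of_prefix hn' (fun k => (h k).symm) hs's).symm

end FNode

/-- two flat Plebeia trees satisfying the structural invariants
(SI1), (SI2) with equal models are equal. -/
theorem stmt4 {α : Type} (t₁ t₂ : FNode α) (h₁ : t₁.inv) (h₂ : t₂.inv)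
    (hmodel : ∀ k : Key, t₁.model k = t₂.model k) : t₁ = t₂ := by
  induction t₁ generalizing t₂ with
  | leaf v =>
    cases t₂ with
    | leaf => simpa [FNode.model] using hmodel []
    | branch => simpa [FNode.model] using hmodel []
    | extender => exact (FNode.isExtender_of_model_eq_extender h₂.2.1 (hmodel · |>.symm)).elim
  | branch l r ihl ihr =>
    cases t₂ with
    | leaf => simpa [FNode.model] using hmodel []
    | branch l' r' =>
      rw [ihl l' h₁.1 h₂.1 (hmodel <| Side.L :: ·), ihr r' h₁.2 h₂.2 (hmodel <| Side.R :: ·)]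
    | extender => exact (FNode.isExtender_of_model_eq_extender h₂.2.1 (hmodel · |>.symm)).elim
  | extender s n ih =>
    cases t₂ with
    | extender s' n' =>
      obtain rfl := FNode.extender_key_eq h₁.1 h₂.1 hmodel
      rw [ih n' h₁.2.2 h₂.2.2 fun k => by simpa [FNode.model_extender_append] using hmodel (s ++ k)]
    | _ => exact (FNode.isExtender_of_model_eq_extender h₁.2.1 hmodel).elim
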